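/- arXiv:1804.01794 — 8 statements merged into one kernel-verified Lean document; each statement's English description precedes it below -/
import Mathlib

section
/- Let q(w,x,y,z) = yz(w+x-y-z)/(wx-yz) be the F_II expression. For complex numbers x₁, x₂, y₁, y₂ with x₁x₂ ≠ y₁y₂, define x₃ = q(x₁,x₂,y₁,y₂) and y₃ = q(y₁,y₂,x₁,x₂). Then x₁+x₂+x₃ = y₁+y₂+y₃ and x₁x₂x₃ = y₁y₂y₃. -/
theorem FII_symmetric_system (x₁ x₂ y₁ y₂ : ℂ) (h : x₁ * x₂ ≠ y₁ * y₂)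
    (x₃ y₃ : ℂ)
    (hx₃ : x₃ = y₁ * y₂ * (x₁ + x₂ - y₁ - y₂) / (x₁ * x₂ - y₁ * y₂))
    (hy₃ : y₃ = x₁ * x₂ * (y₁ + y₂ - x₁ - x₂) / (y₁ * y₂ - x₁ * x₂)) :
    x₁ + x₂ + x₃ = y₁ + y₂ + y₃ ∧ x₁ * x₂ * x₃ = y₁ * y₂ * y₃ := by
  have hd : x₁ * x₂ - y₁ * y₂ ≠ 0 := sub_ne_zero.mpr h
  have hd' : y₁ * y₂ - x₁ * x₂ ≠ 0 := fun hz => hd (by linear_combination -hz)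
  subst hx₃ hy₃
  constructor <;> field_simp <;> ring
end

section
/- Let q(w,x,y,z) = y + z - (wx - yz)/(w + x - y - z) be the F_IV expression. For complex numbers x₁, x₂, y₁, y₂ with x₁ + x₂ ≠ y₁ + y₂, define x₃ = q(x₁,x₂,y₁,y₂) and y₃ = q(y₁,y₂,x₁,x₂). Then x₁+x₂+x₃ = y₁+y₂+y₃ and x₁²+x₂²+x₃² = y₁²+y₂²+y₃². -/
theorem FIV_symmetric_system (x₁ x₂ y₁ y₂ : ℂ) (h : x₁ + x₂ ≠ y₁ + y₂)
    (x₃ y₃ : ℂ)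
    (hx₃ : x₃ = y₁ + y₂ - (x₁ * x₂ - y₁ * y₂) / (x₁ + x₂ - y₁ - y₂))
    (hy₃ : y₃ = x₁ + x₂ - (y₁ * y₂ - x₁ * x₂) / (y₁ + y₂ - x₁ - x₂)) :
    x₁ + x₂ + x₃ = y₁ + y₂ + y₃ ∧
      x₁ ^ 2 + x₂ ^ 2 + x₃ ^ 2 = y₁ ^ 2 + y₂ ^ 2 + y₃ ^ 2 := by
  have hd : x₁ + x₂ - y₁ - y₂ ≠ 0 := by
    intro h0; apply h; linear_combination h0
  have hd' : y₁ + y₂ - x₁ - x₂ ≠ 0 := by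
    intro h0; apply hd; linear_combination -h0
  subst hx₃ hy₃
  constructor <;> field_simp [hd, hd'] <;> ring
end

section
/- Let q(w,x,y,z) = yz·((w-1)(x-1) - (y-1)(z-1)) / (yz(w-1)(x-1) - wx(y-1)(z-1)) be the F_I expression. For complex numbers x₁, x₂, y₁, y₂ with yz(w-1)(x-1) - wx(y-1)(z-1) ≠ 0 where (w,x,y,z) = (x₁,x₂,y₁,y₂) and similarly for (y₁,y₂,x₁,x₂), define x₃ = q(x₁,x₂,y₁,y₂) and y₃ = q(y₁,y₂,x₁,x₂). Then x₁x₂x₃ = y₁y₂y₃ and (1-x₁)(1-x₂)(1-x₃) = (1-y₁)(1-y₂)(1-y₃). -/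
theorem FI_symmetric_system (x₁ x₂ y₁ y₂ : ℂ)
    (h₁ : y₁ * y₂ * (x₁ - 1) * (x₂ - 1) - x₁ * x₂ * (y₁ - 1) * (y₂ - 1) ≠ 0)
    (h₂ : x₁ * x₂ * (y₁ - 1) * (y₂ - 1) - y₁ * y₂ * (x₁ - 1) * (x₂ - 1) ≠ 0)
    (x₃ y₃ : ℂ)
    (hx₃ : x₃ = y₁ * y₂ * ((x₁ - 1) * (x₂ - 1) - (y₁ - 1) * (y₂ - 1))
        / (y₁ * y₂ * (x₁ - 1) * (x₂ - 1) - x₁ * x₂ * (y₁ - 1) * (y₂ - 1)))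
    (hy₃ : y₃ = x₁ * x₂ * ((y₁ - 1) * (y₂ - 1) - (x₁ - 1) * (x₂ - 1))
        / (x₁ * x₂ * (y₁ - 1) * (y₂ - 1) - y₁ * y₂ * (x₁ - 1) * (x₂ - 1))) :
    x₁ * x₂ * x₃ = y₁ * y₂ * y₃ ∧
      (1 - x₁) * (1 - x₂) * (1 - x₃) = (1 - y₁) * (1 - y₂) * (1 - y₃) := by
  subst hx₃ hy₃
  constructor <;> field_simp <;> ring
end

section
/- For the F_II expression q(w,x,y,z) = yz(w+x-y-z)/(wx-yz), the map σ : (x₁,x₂,y₁,y₂) ↦ (x₁, q(x₁,x₂,y₁,y₂), y₁, q(y₁,y₂,x₁,x₂)) is an involution on its domain of definition: applying σ twice returns (x₁,x₂,y₁,y₂), for generic x₁,x₂,y₁,y₂ (with the relevant denominators nonzero). -/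
/-- The F_II expression q(w,x,y,z) = yz(w+x-y-z)/(wx-yz). -/
noncomputable def qFII (w x y z : ℂ) : ℂ := y * z * (w + x - y - z) / (w * x - y * z)

theorem FII_sigma_involution (x₁ x₂ y₁ y₂ : ℂ)
    (h : x₁ * x₂ - y₁ * y₂ ≠ 0)
    (h' : x₁ * qFII x₁ x₂ y₁ y₂ - y₁ * qFII y₁ y₂ x₁ x₂ ≠ 0) :
    qFII x₁ (qFII x₁ x₂ y₁ y₂) y₁ (qFII y₁ y₂ x₁ x₂) = x₂ ∧
      qFII y₁ (qFII y₁ y₂ x₁ x₂) x₁ (qFII x₁ x₂ y₁ y₂) = y₂ := by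
  simp only [qFII] at *
  have h2 : y₁ * y₂ - x₁ * x₂ ≠ 0 := by intro H; apply h; linear_combination -H
  refine ⟨?_, ?_⟩ <;> rw [div_eq_iff]
  · field_simp
    ring
  · exact h'
  · field_simp
    ring
  · intro H
    apply h'
    linear_combination -H
end

section
/- For the F_IV expression q(w,x,y,z) = y + z - (wx-yz)/(w+x-y-z), the map σ : (x₁,x₂,y₁,y₂) ↦ (x₁, q(x₁,x₂,y₁,y₂), y₁, q(y₁,y₂,x₁,x₂)) is an involution on its domain of definition (where the relevant denominators are nonzero). -/
/-- The F_IV expression q(w,x,y,z) = y + z - (wx-yz)/(w+x-y-z). -/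
noncomputable def qFIV (w x y z : ℂ) : ℂ := y + z - (w * x - y * z) / (w + x - y - z)

theorem FIV_sigma_involution (x₁ x₂ y₁ y₂ : ℂ)
    (h : x₁ + x₂ - y₁ - y₂ ≠ 0)
    (h' : x₁ + qFIV x₁ x₂ y₁ y₂ - y₁ - qFIV y₁ y₂ x₁ x₂ ≠ 0) :
    qFIV x₁ (qFIV x₁ x₂ y₁ y₂) y₁ (qFIV y₁ y₂ x₁ x₂) = x₂ ∧
      qFIV y₁ (qFIV y₁ y₂ x₁ x₂) x₁ (qFIV x₁ x₂ y₁ y₂) = y₂ := by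
  set r := (x₁ * x₂ - y₁ * y₂) / (x₁ + x₂ - y₁ - y₂) with hr
  have hq1 : qFIV x₁ x₂ y₁ y₂ = y₁ + y₂ - r := rfl
  clear_value r
  have hq2 : qFIV y₁ y₂ x₁ x₂ = x₁ + x₂ - r := by
    unfold qFIV
    rw [show y₁ * y₂ - x₁ * x₂ = -(x₁ * x₂ - y₁ * y₂) by ring,
        show y₁ + y₂ - x₁ - x₂ = -(x₁ + x₂ - y₁ - y₂) by ring, neg_div_neg_eq, hr]
  have hrd : r * (x₁ + x₂ - y₁ - y₂) = x₁ * x₂ - y₁ * y₂ := by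
    rw [hr]; exact div_mul_cancel₀ _ h
  have hD : y₂ - x₂ ≠ 0 := fun he => h' (by rw [hq1, hq2]; linear_combination he)
  rw [hq1, hq2]
  constructor
  · show y₁ + (x₁ + x₂ - r) -
      (x₁ * (y₁ + y₂ - r) - y₁ * (x₁ + x₂ - r)) /
        (x₁ + (y₁ + y₂ - r) - y₁ - (x₁ + x₂ - r)) = x₂
    rw [show x₁ + (y₁ + y₂ - r) - y₁ - (x₁ + x₂ - r) = y₂ - x₂ by ring]
    field_simp
    linear_combination hrd
  · show x₁ + (y₁ + y₂ - r) -
      (y₁ * (x₁ + x₂ - r) - x₁ * (y₁ + y₂ - r)) /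
        (y₁ + (x₁ + x₂ - r) - x₁ - (y₁ + y₂ - r)) = y₂
    rw [show y₁ + (x₁ + x₂ - r) - x₁ - (y₁ + y₂ - r) = -(y₂ - x₂) by ring]
    rw [div_neg]
    field_simp
    linear_combination hrd
end

section
/- The polynomials (x-x₁)(x-x₂)(x-x₃), (x-y₁)(x-y₂)(x-y₃), and P(x) = x(1-x) are linearly dependent over ℂ if and only if x₁x₂x₃ = y₁y₂y₃ and (1-x₁)(1-x₂)(1-x₃) = (1-y₁)(1-y₂)(1-y₃). -/
open Polynomial in
theorem FI_linear_dependence (x₁ x₂ x₃ y₁ y₂ y₃ : ℂ) :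
    ¬ LinearIndependent ℂ
        ![(X - C x₁) * (X - C x₂) * (X - C x₃),
           (X - C y₁) * (X - C y₂) * (X - C y₃),
           X * (1 - X)] ↔
      (x₁ * x₂ * x₃ = y₁ * y₂ * y₃ ∧
        (1 - x₁) * (1 - x₂) * (1 - x₃) = (1 - y₁) * (1 - y₂) * (1 - y₃)) := by
  rw [Fintype.not_linearIndependent_iff]
  have hf : (X - C x₁) * (X - C x₂) * (X - C x₃) =
      X ^ 3 - C (x₁ + x₂ + x₃) * X ^ 2 + C (x₁ * x₂ + x₁ * x₃ + x₂ * x₃) * X ^ 1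
        - C (x₁ * x₂ * x₃) * X ^ 0 := by
    simp only [C_add, C_mul]; ring
  have hg : (X - C y₁) * (X - C y₂) * (X - C y₃) =
      X ^ 3 - C (y₁ + y₂ + y₃) * X ^ 2 + C (y₁ * y₂ + y₁ * y₃ + y₂ * y₃) * X ^ 1
        - C (y₁ * y₂ * y₃) * X ^ 0 := by
    simp only [C_add, C_mul]; ring
  have hh : (X : ℂ[X]) * (1 - X) = X ^ 1 - X ^ 2 := by ring
  constructor
  · rintro ⟨g, hsum, i, hi⟩
    simp only [Fin.sum_univ_three, Matrix.cons_val_zero, Matrix.cons_val_one, Matrix.head_cons,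
      Matrix.cons_val_two, Matrix.tail_cons, smul_eq_C_mul, hf, hg, hh] at hsum
    set a := g 0 with ha0
    set b := g 1 with hb0
    set c := g 2 with hc0
    have h3 := congrArg (fun p => coeff p 3) hsum
    have h2 := congrArg (fun p => coeff p 2) hsum
    have h1 := congrArg (fun p => coeff p 1) hsum
    have h0 := congrArg (fun p => coeff p 0) hsum
    simp only [coeff_add, coeff_sub, coeff_mul_C, coeff_C_mul, mul_sub, mul_add, coeff_X_pow,
      coeff_zero] at h3 h2 h1 h0
    norm_num at h3 h2 h1 h0
    -- h3 : a + b = 0 (roughly)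
    have ha : a ≠ 0 := by
      intro haz
      fin_cases i
      · exact hi haz
      · apply hi
        show b = 0
        linear_combination h3 - haz
      · apply hi
        show c = 0
        linear_combination h1 - (x₁ * x₂ + x₁ * x₃ + x₂ * x₃) * haz
          - (y₁ * y₂ + y₁ * y₃ + y₂ * y₃) * (h3 - haz)
    constructor
    · apply mul_left_cancel₀ ha
      linear_combination -h0 - y₁ * y₂ * y₃ * h3
    · apply mul_left_cancel₀ ha
      linear_combination h2 + h1 + h0 +
        (y₁ + y₂ + y₃ - (y₁ * y₂ + y₁ * y₃ + y₂ * y₃) + y₁ * y₂ * y₃) * h3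
  · rintro ⟨h1, h2⟩
    refine ⟨![1, -1, (y₁ + y₂ + y₃) - (x₁ + x₂ + x₃)], ?_, 0, by norm_num⟩
    simp only [Fin.sum_univ_three, Matrix.cons_val_zero, Matrix.cons_val_one, Matrix.head_cons,
      Matrix.cons_val_two, Matrix.tail_cons, smul_eq_C_mul]
    have h1' := congrArg C h1
    have h2' := congrArg C h2
    simp only [C_mul, C_sub, C_add, C_neg, C_1, map_neg, map_one]
    simp only [C_mul, C_sub, C_1] at h1' h2'
    linear_combination (X : ℂ[X]) * h2' + ((X : ℂ[X]) - 1) * h1'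
end

section
/- Define F(k,h) = ζ(k+h) - ζ(k) - ζ(h) with ζ(u) = 1/u (rational case). Then for complex numbers k₁, h₁, k, h (all relevant arguments nonzero), setting x₁ = F(k₁,h₁), x₂ = F(k,h), x₃ = F(-h₁-k, -k₁-h), y₁ = F(k₁,h), y₂ = F(k,h₁), y₃ = F(-h-k, -k₁-h₁), the equalities x₁+x₂+x₃ = y₁+y₂+y₃ and x₁²+x₂²+x₃² = y₁²+y₂²+y₃² hold. -/
/-- The rational F_IV substitution F(k,h) = ζ(k+h) - ζ(k) - ζ(h) with ζ(u) = 1/u. -/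
noncomputable def Frat (k h : ℂ) : ℂ := 1 / (k + h) - 1 / k - 1 / h

/-!
Since ζ(u) = 1/u is odd, F(-k, -h) = -F(k, h), so x₃ = -F(k + h₁, k₁ + h) and
y₃ = -F(k + h, k₁ + h₁). Both sides of the first identity are then sums of the same nine terms
±ζ(·). For the second, the rational case of the addition formula for ℘ = -ζ' = 1/u²,
F(k, h)² = ℘(k) + ℘(h) + ℘(k + h), turns both sides into sums of the same nine terms ℘(·).
-/

theorem sq_one_div_add_sub_one_div_sub_one_div {K : Type*} [Field K] {k h : K}
    (hk : k ≠ 0) (hh : h ≠ 0) (hkh : k + h ≠ 0) :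
    (1 / (k + h) - 1 / k - 1 / h) ^ 2 = 1 / k ^ 2 + 1 / h ^ 2 + 1 / (k + h) ^ 2 := by
  field_simp
  ring

theorem Frat_sq {k h : ℂ} (hk : k ≠ 0) (hh : h ≠ 0) (hkh : k + h ≠ 0) :
    Frat k h ^ 2 = 1 / k ^ 2 + 1 / h ^ 2 + 1 / (k + h) ^ 2 :=
  sq_one_div_add_sub_one_div_sub_one_div hk hh hkh

theorem Frat_neg (k h : ℂ) : Frat (-k) (-h) = -Frat k h := by
  simp only [Frat, ← neg_add, one_div, inv_neg]
  ring

theorem Frat_neg_sub_neg (a b c d : ℂ) : Frat (-a - b) (-c - d) = -Frat (b + a) (c + d) := by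
  rw [← Frat_neg]
  congr 1 <;> ring

theorem FIV_rational_solution_general (k₁ h₁ k h : ℂ)
    (hk₁ : k₁ ≠ 0) (hh₁ : h₁ ≠ 0) (hk : k ≠ 0) (hh : h ≠ 0)
    (h1 : k₁ + h₁ ≠ 0) (h2 : k + h ≠ 0) (h3 : k₁ + h ≠ 0) (h4 : k + h₁ ≠ 0)
    (h7 : -h₁ - k + (-k₁ - h) ≠ 0)
    (h10 : -h - k + (-k₁ - h₁) ≠ 0) :
    Frat k₁ h₁ + Frat k h + Frat (-h₁ - k) (-k₁ - h)
        = Frat k₁ h + Frat k h₁ + Frat (-h - k) (-k₁ - h₁) ∧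
      (Frat k₁ h₁) ^ 2 + (Frat k h) ^ 2 + (Frat (-h₁ - k) (-k₁ - h)) ^ 2
        = (Frat k₁ h) ^ 2 + (Frat k h₁) ^ 2 + (Frat (-h - k) (-k₁ - h₁)) ^ 2 := by
  have hx₃ : k + h₁ + (k₁ + h) ≠ 0 := fun h0 ↦ h7 (by linear_combination -h0)
  have hy₃ : k + h + (k₁ + h₁) ≠ 0 := fun h0 ↦ h10 (by linear_combination -h0)
  rw [Frat_neg_sub_neg, Frat_neg_sub_neg, neg_sq, neg_sq]
  constructor
  · simp only [Frat]
    ring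
  · rw [Frat_sq hk₁ hh₁ h1, Frat_sq hk hh h2, Frat_sq h4 h3 hx₃, Frat_sq hk₁ hh h3,
      Frat_sq hk hh₁ h4, Frat_sq h2 h1 hy₃]
    ring

theorem FIV_rational_solution (k₁ h₁ k h : ℂ)
    (hk₁ : k₁ ≠ 0) (hh₁ : h₁ ≠ 0) (hk : k ≠ 0) (hh : h ≠ 0)
    (h1 : k₁ + h₁ ≠ 0) (h2 : k + h ≠ 0) (h3 : k₁ + h ≠ 0) (h4 : k + h₁ ≠ 0)
    (h5 : -h₁ - k ≠ 0) (h6 : -k₁ - h ≠ 0) (h7 : -h₁ - k + (-k₁ - h) ≠ 0)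
    (h8 : -h - k ≠ 0) (h9 : -k₁ - h₁ ≠ 0) (h10 : -h - k + (-k₁ - h₁) ≠ 0) :
    Frat k₁ h₁ + Frat k h + Frat (-h₁ - k) (-k₁ - h)
        = Frat k₁ h + Frat k h₁ + Frat (-h - k) (-k₁ - h₁) ∧
      (Frat k₁ h₁) ^ 2 + (Frat k h) ^ 2 + (Frat (-h₁ - k) (-k₁ - h)) ^ 2
        = (Frat k₁ h) ^ 2 + (Frat k h₁) ^ 2 + (Frat (-h - k) (-k₁ - h₁)) ^ 2 :=
  FIV_rational_solution_general k₁ h₁ k h hk₁ hh₁ hk hh h1 h2 h3 h4 h7 h10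
end

section
/- Define F(k,h) = ζ(k+h-l) - ζ(k-l) - ζ(h-l) - ζ(l) with ζ(u) = 1/u (rational case) and l a nonzero complex constant. Then for complex k₁, h₁, k, h (all relevant arguments nonzero), setting x₁ = F(k₁,h₁), x₂ = F(k,h), x₃ = F(2l-h₁-k, 2l-k₁-h), y₁ = F(k₁,h), y₂ = F(k,h₁), y₃ = F(2l-h-k, 2l-k₁-h₁), the equalities x₁+x₂+x₃ = y₁+y₂+y₃ and x₁x₂x₃ = y₁y₂y₃ hold. -/
/-- The rational F_II substitution
F(k,h) = ζ(k+h-l) - ζ(k-l) - ζ(h-l) - ζ(l) with ζ(u) = 1/u. -/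
noncomputable def FratII (l k h : ℂ) : ℂ :=
  1 / (k + h - l) - 1 / (k - l) - 1 / (h - l) - 1 / l

lemma Ffact (l k h : ℂ) (hl : l ≠ 0) (h1 : k - l ≠ 0) (h2 : h - l ≠ 0)
    (h3 : k + h - l ≠ 0) :
    FratII l k h = -((k + h - 2*l) * k * h) * (k - l)⁻¹ * (h - l)⁻¹ * l⁻¹ * (k + h - l)⁻¹ := by
  unfold FratII
  field_simp
  ring

theorem FII_rational_solution (l k₁ h₁ k h : ℂ) (hl : l ≠ 0)
    (e1 : k₁ + h₁ - l ≠ 0) (e2 : k₁ - l ≠ 0) (e3 : h₁ - l ≠ 0)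
    (e4 : k + h - l ≠ 0) (e5 : k - l ≠ 0) (e6 : h - l ≠ 0)
    (e7 : k₁ + h - l ≠ 0) (e8 : k + h₁ - l ≠ 0)
    (e9 : (2 * l - h₁ - k) + (2 * l - k₁ - h) - l ≠ 0)
    (e10 : (2 * l - h₁ - k) - l ≠ 0) (e11 : (2 * l - k₁ - h) - l ≠ 0)
    (e12 : (2 * l - h - k) + (2 * l - k₁ - h₁) - l ≠ 0)
    (e13 : (2 * l - h - k) - l ≠ 0) (e14 : (2 * l - k₁ - h₁) - l ≠ 0) :
    FratII l k₁ h₁ + FratII l k h + FratII l (2 * l - h₁ - k) (2 * l - k₁ - h)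
        = FratII l k₁ h + FratII l k h₁
            + FratII l (2 * l - h - k) (2 * l - k₁ - h₁) ∧
      FratII l k₁ h₁ * FratII l k h
          * FratII l (2 * l - h₁ - k) (2 * l - k₁ - h)
        = FratII l k₁ h * FratII l k h₁
            * FratII l (2 * l - h - k) (2 * l - k₁ - h₁) := by
  have r1 : (2*l-h₁-k) + (2*l-k₁-h) - l = 3*l - k₁ - h₁ - k - h := by ring
  have r2 : (2*l-h₁-k) - l = -(k + h₁ - l) := by ring
  have r3 : (2*l-k₁-h) - l = -(k₁ + h - l) := by ring
  have r4 : (2*l-h-k) + (2*l-k₁-h₁) - l = 3*l - k₁ - h₁ - k - h := by ring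
  have r5 : (2*l-h-k) - l = -(k + h - l) := by ring
  have r6 : (2*l-k₁-h₁) - l = -(k₁ + h₁ - l) := by ring
  constructor
  · simp only [FratII]
    rw [r1, r2, r3, r4, r5, r6]
    simp only [div_neg]
    ring
  · rw [Ffact l k₁ h₁ hl e2 e3 e1, Ffact l k h hl e5 e6 e4,
      Ffact l _ _ hl e10 e11 e9, Ffact l k₁ h hl e2 e6 e7,
      Ffact l k h₁ hl e5 e3 e8, Ffact l _ _ hl e13 e14 e12]
    rw [r1, r2, r3, r4, r5, r6]
    simp only [inv_neg]
    ring
end
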